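/- Let k ≥ 2 and let H be a k-uniform hypergraph with m edges in which every vertex has degree 1 or 2. Let G be the multigraph whose vertices are the edges of H and which has one edge joining e and f for every vertex of H of degree 2 contained in both e and f. Then τ(H) ≤ m − α'(G). -/

import Mathlib

/-- A hypergraph: a finite vertex set together with a finite (indexed, hence
multiset-like) family of edges, each edge a subset of the vertex set. -/
structure IdxHypergraph (V : Type*) where
  verts : Finset V
  numEdges : ℕ
  edge : Fin numEdges → Finset V
  edge_sub : ∀ i, edge i ⊆ verts

namespace IdxHypergraph

variable {V : Type*} [DecidableEq V]

/-- `H` is `k`-uniform if every edge has exactly `k` vertices. -/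
def Uniform (H : IdxHypergraph V) (k : ℕ) : Prop :=
  ∀ i, (H.edge i).card = k

/-- A transversal: a set of vertices meeting every edge. -/
def IsTransversal (H : IdxHypergraph V) (T : Finset V) : Prop :=
  T ⊆ H.verts ∧ ∀ i, (T ∩ H.edge i).Nonempty

/-- The transversal number `τ(H)`: minimum size of a transversal. -/
noncomputable def tau (H : IdxHypergraph V) : ℕ :=
  sInf {n | ∃ T : Finset V, H.IsTransversal T ∧ T.card = n}

/-- The degree of a vertex: the number of edges containing it. -/
def degree (H : IdxHypergraph V) (v : V) : ℕ :=
  (Finset.univ.filter fun i => v ∈ H.edge i).card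

/-- Two vertices are adjacent if some edge contains both. -/
def Adj (H : IdxHypergraph V) (u v : V) : Prop :=
  u ≠ v ∧ ∃ i, u ∈ H.edge i ∧ v ∈ H.edge i

/-- `H` is connected if every pair of vertices is joined by a sequence of
consecutively adjacent vertices. -/
def Connected (H : IdxHypergraph V) : Prop :=
  ∀ u ∈ H.verts, ∀ v ∈ H.verts, Relation.ReflTransGen H.Adj u v

/-- `H` is (a copy of) `E_k`: `k` vertices and exactly one edge. -/
def IsEk (H : IdxHypergraph V) (k : ℕ) : Prop :=
  H.verts.card = k ∧ H.numEdges = 1 ∧ ∀ i, H.edge i = H.verts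

/-- `H` is (a copy of) the generalized triangle `T_k`: the vertex set is the
disjoint union of sets `A`, `B`, `C`, `D` with `|A| = ⌈k/2⌉`,
`|B| = |C| = ⌊k/2⌋`, `|D| = ⌈k/2⌉ - ⌊k/2⌋`, and the edges are exactly
`A ∪ B`, `A ∪ C` and `B ∪ C ∪ D`. -/
def IsTk (H : IdxHypergraph V) (k : ℕ) : Prop :=
  ∃ A B C D : Finset V,
    A.card = (k + 1) / 2 ∧ B.card = k / 2 ∧ C.card = k / 2 ∧
    D.card = (k + 1) / 2 - k / 2 ∧
    Disjoint A B ∧ Disjoint A C ∧ Disjoint A D ∧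
    Disjoint B C ∧ Disjoint B D ∧ Disjoint C D ∧
    H.verts = A ∪ B ∪ C ∪ D ∧
    H.numEdges = 3 ∧
    (List.ofFn H.edge : Multiset (Finset V)) = {A ∪ B, A ∪ C, B ∪ C ∪ D}

end IdxHypergraph
/-- A multigraph: a finite vertex set together with symmetric, loopless
edge multiplicities supported on the vertex set. -/
structure Multigraph (V : Type*) where
  verts : Finset V
  mult : V → V → ℕ
  symm : ∀ u v, mult u v = mult v u
  loopless : ∀ v, mult v v = 0
  supp : ∀ u v, mult u v ≠ 0 → u ∈ verts ∧ v ∈ verts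

namespace Multigraph

variable {V : Type*}

/-- The number of edges of `G` (counted with multiplicity). -/
def edgeCount (G : Multigraph V) : ℕ :=
  (∑ u ∈ G.verts, ∑ v ∈ G.verts, G.mult u v) / 2

/-- The degree of a vertex: the sum of the multiplicities of edges at it. -/
def degree (G : Multigraph V) (v : V) : ℕ :=
  ∑ u ∈ G.verts, G.mult v u

/-- The maximum degree `Δ(G)`. -/
def maxDegree (G : Multigraph V) : ℕ :=
  G.verts.sup G.degree

/-- A matching: a set of edges (each recorded as an ordered pair of its
endpoints, present in the multigraph) that pairwise share no endpoint. -/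
def IsMatching (G : Multigraph V) (M : Finset (V × V)) : Prop :=
  (∀ p ∈ M, 0 < G.mult p.1 p.2) ∧
    ∀ p ∈ M, ∀ q ∈ M, p ≠ q →
      p.1 ≠ q.1 ∧ p.1 ≠ q.2 ∧ p.2 ≠ q.1 ∧ p.2 ≠ q.2

/-- The matching number `α'(G)`: the maximum size of a matching. -/
noncomputable def matchingNumber (G : Multigraph V) : ℕ :=
  sSup {n | ∃ M : Finset (V × V), G.IsMatching M ∧ M.card = n}

/-- `G` is connected if every pair of vertices is joined by a path. -/
def Connected (G : Multigraph V) : Prop :=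
  ∀ u ∈ G.verts, ∀ v ∈ G.verts,
    Relation.ReflTransGen (fun a b => 0 < G.mult a b) u v

/-- `G` is a Shannon multigraph of degree `d`: three vertices `x, y, z` with
`μ(xy) = μ(xz) = ⌊d/2⌋` and `μ(yz) = ⌈d/2⌉`. -/
def IsShannon [DecidableEq V] (G : Multigraph V) (d : ℕ) : Prop :=
  ∃ x y z : V, x ≠ y ∧ x ≠ z ∧ y ≠ z ∧ G.verts = {x, y, z} ∧
    G.mult x y = d / 2 ∧ G.mult x z = d / 2 ∧ G.mult y z = (d + 1) / 2

/-- A proper edge coloring of `G` with colors from `Fin c`: each pair of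
vertices receives a set of colors of size equal to its multiplicity (one color
per parallel edge, so parallel edges get distinct colors), symmetrically, and
edges sharing an endpoint get disjoint color sets. -/
def IsProperEdgeColoring (G : Multigraph V) {c : ℕ}
    (f : V → V → Finset (Fin c)) : Prop :=
  (∀ u v, f u v = f v u) ∧ (∀ u v, (f u v).card = G.mult u v) ∧
    ∀ u v w, v ≠ w → Disjoint (f u v) (f u w)

/-- The chromatic index `χ'(G)`: minimum number of colors in a proper edge
coloring. -/
noncomputable def chromaticIndex (G : Multigraph V) : ℕ :=
  sInf {c | ∃ f : V → V → Finset (Fin c), G.IsProperEdgeColoring f}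

/-- The number of edges of `G` receiving color `i` in the coloring `f`. -/
def colorClassSize (G : Multigraph V) {c : ℕ}
    (f : V → V → Finset (Fin c)) (i : Fin c) : ℕ :=
  (∑ u ∈ G.verts, ∑ v ∈ G.verts, if i ∈ f u v then 1 else 0) / 2

end Multigraph

/-! Take a maximum matching `M` of `G`. A vertex shared by each matched pair of edges, together
with one vertex from each unmatched edge, is a transversal of size `|M| + (m - 2|M|) = m - |M|`. -/

namespace Multigraph

variable {V : Type*} {G : Multigraph V} {M : Finset (V × V)}

theorem IsMatching.fst_ne_snd (hM : G.IsMatching M) {p : V × V} (hp : p ∈ M) :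
    p.1 ≠ p.2 := by
  intro h
  have := hM.1 p hp
  rw [h, G.loopless] at this
  exact this.false

theorem IsMatching.injOn_fst (hM : G.IsMatching M) : Set.InjOn Prod.fst (M : Set (V × V)) :=
  fun p hp q hq hpq => by_contra fun hne => (hM.2 p hp q hq hne).1 hpq

theorem IsMatching.card_le [Fintype V] (hM : G.IsMatching M) : M.card ≤ Fintype.card V := by
  classical
  rw [← Finset.card_image_of_injOn hM.injOn_fst]
  exact Finset.card_le_univ _

theorem IsMatching.card_biUnion_endpoints [DecidableEq V] (hM : G.IsMatching M) :
    (M.biUnion fun p => {p.1, p.2}).card = 2 * M.card := by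
  rw [Finset.card_biUnion, Finset.sum_congr rfl fun p hp => Finset.card_pair (hM.fst_ne_snd hp),
    Finset.sum_const, smul_eq_mul, mul_comm]
  intro p hp q hq hpq
  obtain ⟨h11, h12, h21, h22⟩ := hM.2 p hp q hq hpq
  simp [h11.symm, h12.symm, h21.symm, h22.symm]

theorem exists_isMatching_card_eq_matchingNumber [Fintype V] (G : Multigraph V) :
    ∃ M, G.IsMatching M ∧ M.card = G.matchingNumber := by
  refine Nat.sSup_mem (s := {n | ∃ M, G.IsMatching M ∧ M.card = n})
    ⟨0, ∅, by simp [IsMatching], rfl⟩ ⟨Fintype.card V, ?_⟩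
  rintro n ⟨M, hM, rfl⟩
  exact hM.card_le

end Multigraph

namespace IdxHypergraph

variable {V : Type*} {H : IdxHypergraph V}

theorem Uniform.edge_nonempty {k : ℕ} (h : H.Uniform k) (hk : k ≠ 0) (i : Fin H.numEdges) :
    (H.edge i).Nonempty :=
  Finset.card_pos.mp (by rw [h i]; omega)

variable [DecidableEq V]

theorem tau_le_card {T : Finset V} (hT : H.IsTransversal T) : H.tau ≤ T.card :=
  Nat.sInf_le ⟨T, hT, rfl⟩

theorem tau_le_numEdges_sub_card_of_isMatching (hne : ∀ i, (H.edge i).Nonempty)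
    {G : Multigraph (Fin H.numEdges)}
    (hG : ∀ i j, 0 < G.mult i j → (H.edge i ∩ H.edge j).Nonempty)
    {M : Finset (Fin H.numEdges × Fin H.numEdges)} (hM : G.IsMatching M) :
    H.tau ≤ H.numEdges - M.card := by
  choose w hw using hne
  have hcommon : ∀ p : Fin H.numEdges × Fin H.numEdges,
      ∃ v, p ∈ M → v ∈ H.edge p.1 ∩ H.edge p.2 :=
    fun p => if hp : p ∈ M then (hG _ _ (hM.1 p hp)).imp fun _ h _ => h
      else ⟨w p.1, fun h => absurd h hp⟩
  choose c hc using hcommon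
  set C := M.biUnion fun p => {p.1, p.2}
  set T := M.image c ∪ Cᶜ.image w
  have hT : H.IsTransversal T := by
    refine ⟨fun v hv => ?_, fun i => ?_⟩
    · obtain ⟨p, hp, rfl⟩ | ⟨i, -, rfl⟩ := Finset.mem_union.mp hv |>.imp Finset.mem_image.mp
        Finset.mem_image.mp
      exacts [H.edge_sub _ (Finset.mem_inter.mp (hc p hp)).1, H.edge_sub i (hw i)]
    by_cases hi : i ∈ C
    · obtain ⟨p, hp, hip⟩ := Finset.mem_biUnion.mp hi
      have hcT : c p ∈ T := Finset.mem_union_left _ (Finset.mem_image_of_mem c hp)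
      obtain ⟨hc1, hc2⟩ := Finset.mem_inter.mp (hc p hp)
      obtain rfl | rfl := by simpa using hip
      exacts [⟨c p, Finset.mem_inter.mpr ⟨hcT, hc1⟩⟩, ⟨c p, Finset.mem_inter.mpr ⟨hcT, hc2⟩⟩]
    · exact ⟨w i, Finset.mem_inter.mpr
        ⟨Finset.mem_union_right _ (Finset.mem_image_of_mem w (Finset.mem_compl.mpr hi)), hw i⟩⟩
  have hCcard : C.card = 2 * M.card := hM.card_biUnion_endpoints
  have hCle : C.card ≤ H.numEdges := (Finset.card_le_univ C).trans_eq (Fintype.card_fin _)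
  calc H.tau ≤ T.card := tau_le_card hT
    _ ≤ (M.image c).card + (Cᶜ.image w).card := Finset.card_union_le _ _
    _ ≤ M.card + Cᶜ.card := add_le_add Finset.card_image_le Finset.card_image_le
    _ = M.card + (H.numEdges - 2 * M.card) := by rw [Finset.card_compl, Fintype.card_fin, hCcard]
    _ ≤ H.numEdges - M.card := by omega

end IdxHypergraph

theorem stmt15_general {V : Type*} [DecidableEq V] (k : ℕ) (hk : 2 ≤ k)
    (H : IdxHypergraph V) (huni : H.Uniform k)
    (G : Multigraph (Fin H.numEdges))
    (hGm : ∀ i j, i ≠ j → G.mult i j =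
      (H.verts.filter fun v =>
        H.degree v = 2 ∧ v ∈ H.edge i ∧ v ∈ H.edge j).card) :
    H.tau ≤ H.numEdges - G.matchingNumber := by
  have hG : ∀ i j, 0 < G.mult i j → (H.edge i ∩ H.edge j).Nonempty := by
    intro i j hpos
    obtain rfl | hij := eq_or_ne i j
    · exact absurd hpos (by simp [G.loopless])
    rw [hGm i j hij, Finset.card_pos] at hpos
    obtain ⟨v, hv⟩ := hpos
    exact ⟨v, Finset.mem_inter.mpr (Finset.mem_filter.mp hv).2.2⟩
  obtain ⟨M, hM, hcard⟩ := G.exists_isMatching_card_eq_matchingNumber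
  rw [← hcard]
  exact H.tau_le_numEdges_sub_card_of_isMatching (huni.edge_nonempty (by omega)) hG hM

/-- For `k ≥ 2`, let `H` be a `k`-uniform hypergraph with `m` edges in which
every vertex has degree `1` or `2`, and let `G` be the multigraph whose
vertices are the edges of `H`, with one edge joining `e` and `f` for every
degree-`2` vertex of `H` lying in both `e` and `f`. Then
`τ(H) ≤ m - α'(G)`. -/
theorem stmt15 {V : Type*} [DecidableEq V] (k : ℕ) (hk : 2 ≤ k)
    (H : IdxHypergraph V) (huni : H.Uniform k)
    (hdeg : ∀ v ∈ H.verts, H.degree v = 1 ∨ H.degree v = 2)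
    (G : Multigraph (Fin H.numEdges))
    (hGv : G.verts = Finset.univ)
    (hGm : ∀ i j, i ≠ j → G.mult i j =
      (H.verts.filter fun v =>
        H.degree v = 2 ∧ v ∈ H.edge i ∧ v ∈ H.edge j).card) :
    H.tau ≤ H.numEdges - G.matchingNumber :=
  stmt15_general k hk H huni G hGm
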